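/- Under these definitions, U_i^{new} = U_i for every i ∈ ℤ; that is, the explicit first-order well-balanced transport step, built from the HLL-type flux, the non-conservative jump terms, and the non-conservative volume term, exactly preserves point values of the stationary solution Uᵉ. -/
import Mathlib


/-- The transport flux of the SWLME splitting, in the conserved variables
`U = (h, q_0, q_1, ..., q_N)` (with `u_k = q_k/h`):
`F(U) = (q_0, q_0²/h + Σ_{k=1}^N q_k²/((2k+1)·h), 2·q_0·q_1/h, ..., 2·q_0·q_N/h)`. -/
noncomputable def transportFlux (N : ℕ) (V : Fin (N + 2) → ℝ) : Fin (N + 2) → ℝ :=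
  fun j =>
    if j.val = 0 then V 1
    else if j.val = 1 then
      (V 1) ^ 2 / V 0 +
        ∑ k : Fin N, (V ⟨k.val + 2, by have := k.isLt; omega⟩) ^ 2
          / ((2 * ((k.val : ℝ) + 1) + 1) * V 0)
    else 2 * V 1 * V j / V 0

/-- The non-conservative matrix `B(U) = −diag(0, 0, q_0/h, ..., q_0/h)`. -/
noncomputable def transportB (N : ℕ) (V : Fin (N + 2) → ℝ) :
    Matrix (Fin (N + 2)) (Fin (N + 2)) ℝ :=
  Matrix.diagonal fun j => if 2 ≤ j.val then -(V 1 / V 0) else 0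

/-- The explicit first-order well-balanced transport step, built from the HLL-type
flux, the non-conservative jump terms, and the non-conservative volume term, exactly
preserves point values of the stationary solution `Uᵉ`: under the definitions below,
`U_i^{new} = U_i` for every `i ∈ ℤ`. -/
theorem explicit_transport_step_well_balanced
    (N : ℕ) (hN : 1 ≤ N) (Δx Δt : ℝ) (hΔx : 0 < Δx)
    (Ue : ℝ → Fin (N + 2) → ℝ) (hUe0 : ∀ x : ℝ, Ue x 0 ≠ 0)
    -- data: point values of the stationary solution
    (Ud : ℤ → Fin (N + 2) → ℝ) (hUd : ∀ i : ℤ, Ud i = Ue ((i : ℝ) * Δx))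
    -- arbitrary HLL coefficients at the interfaces x_{i+1/2}
    (α0 α1 : ℤ → ℝ)
    -- interface states at x_{i+1/2}: left and right reconstructed values
    (Um Up : ℤ → Fin (N + 2) → ℝ)
    (hUm : ∀ i : ℤ, Um i = Ue ((i : ℝ) * Δx + Δx / 2) + Ud i - Ue ((i : ℝ) * Δx))
    (hUp : ∀ i : ℤ, Up i =
      Ue ((i : ℝ) * Δx + Δx / 2) + Ud (i + 1) - Ue (((i : ℝ) + 1) * Δx))
    -- HLL-type numerical flux at x_{i+1/2}
    (Flx : ℤ → Fin (N + 2) → ℝ)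
    (hFlx : ∀ i : ℤ, Flx i =
      (1 / 2 : ℝ) • (transportFlux N (Um i) + transportFlux N (Up i))
      - (1 / 2 : ℝ) • (α0 i • (Up i - Um i)
          + α1 i • (transportFlux N (Up i) - transportFlux N (Um i))))
    -- non-conservative interface terms at x_{i+1/2}
    (Bm Bp : ℤ → Fin (N + 2) → ℝ)
    (hBm : ∀ i : ℤ, Bm i =
      (1 / 2 : ℝ) • (transportB N ((1 / 2 : ℝ) • (Um i + Up i))).mulVec (Up i - Um i)
      - ((1 / 2 : ℝ) * α1 i) •
          (transportB N ((1 / 2 : ℝ) • (Um i + Up i))).mulVec (Up i - Um i))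
    (hBp : ∀ i : ℤ, Bp i =
      (1 / 2 : ℝ) • (transportB N ((1 / 2 : ℝ) • (Um i + Up i))).mulVec (Up i - Um i)
      + ((1 / 2 : ℝ) * α1 i) •
          (transportB N ((1 / 2 : ℝ) • (Um i + Up i))).mulVec (Up i - Um i))
    -- the update
    (Unew : ℤ → Fin (N + 2) → ℝ)
    (hUnew : ∀ i : ℤ, Unew i =
      Ud i
      - (Δt / Δx) • (Flx i - transportFlux N (Ue ((i : ℝ) * Δx + Δx / 2))
          - Flx (i - 1) + transportFlux N (Ue ((i : ℝ) * Δx - Δx / 2)))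
      - (Δt / Δx) • (Bm i + Bp (i - 1))
      - (Δt / Δx) • (transportB N (Ud i)).mulVec
          (Um i - Ue ((i : ℝ) * Δx + Δx / 2) - Up (i - 1) + Ue ((i : ℝ) * Δx - Δx / 2))) :
    ∀ i : ℤ, Unew i = Ud i := by
  intro i
  have hm : ∀ j : ℤ, Um j = Ue ((j : ℝ) * Δx + Δx / 2) := by
    intro j
    rw [hUm, hUd]
    abel
  have hp : ∀ j : ℤ, Up j = Ue ((j : ℝ) * Δx + Δx / 2) := by
    intro j
    rw [hUp, hUd]
    push_cast
    abel
  have hflx : ∀ j : ℤ, Flx j = transportFlux N (Ue ((j : ℝ) * Δx + Δx / 2)) := by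
    intro j
    rw [hFlx, hm, hp]
    simp only [sub_self, smul_zero, add_zero, sub_zero, zero_add]
    module
  have harg : ((i - 1 : ℤ) : ℝ) * Δx + Δx / 2 = (i : ℝ) * Δx - Δx / 2 := by
    push_cast; ring
  have hbm : Bm i = 0 := by
    rw [hBm, hm, hp]
    simp
  have hbp : Bp (i - 1) = 0 := by
    rw [hBp, hm, hp]
    simp
  rw [hUnew, hflx, hflx, hbm, hbp, hm, hp, harg]
  simp
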